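/- Let Γ = I_{r²} − r^{-1} vec(I_r) vec(I_r)ᵀ and K_{r,r} the commutation matrix. Then Σ₀ := Γ · ((I_{r²} + K_{r,r})/2) · Γ equals (1/2)(I_{r²} + K_{r,r} − (2/r) vec(I_r) vec(I_r)ᵀ), and Σ₀ is symmetric and idempotent with rank (r−1)(r+2)/2. -/

import Mathlib

/-
With `V = vec(I) vec(I)ᵀ` and `S = (I + K)/2` one has `K² = I`, `KV = VK = V` and `V² = rV`.
Hence `S` is idempotent and absorbs `V` on both sides, so expanding `(I − V/r) S (I − V/r)` gives
`S − V/r`, which is again idempotent. The rank of an idempotent matrix is its trace, and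
`tr S − tr (V/r) = r(r+1)/2 − 1 = (r−1)(r+2)/2`.
-/

open Matrix

/-- `vec(I_r)` as a function on pair indices. -/
noncomputable def vecIdFun (r : ℕ) : Fin r × Fin r → ℝ :=
  fun ij => if ij.1 = ij.2 then 1 else 0

/-- The commutation matrix `K_{r,r} = Σ_{i,j} (e_i e_jᵀ) ⊗ (e_j e_iᵀ)`. -/
noncomputable def commMat (r : ℕ) : Matrix (Fin r × Fin r) (Fin r × Fin r) ℝ :=
  fun ij kl => if ij.1 = kl.2 ∧ ij.2 = kl.1 then 1 else 0

/-- The centering projection `Γ = I_{r²} − r⁻¹ vec(I_r) vec(I_r)ᵀ`. -/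
noncomputable def centerMat (r : ℕ) : Matrix (Fin r × Fin r) (Fin r × Fin r) ℝ :=
  1 - (r : ℝ)⁻¹ • Matrix.vecMulVec (vecIdFun r) (vecIdFun r)

theorem inv_smul_inv_smul_smul {K M : Type*} [Field K] [AddCommGroup M] [Module K M] (c : K)
    (x : M) : c⁻¹ • c⁻¹ • c • x = c⁻¹ • x := by
  rcases eq_or_ne c 0 with rfl | hc
  · simp
  · rw [inv_smul_smul₀ hc]

section Algebra

variable {K A : Type*} [Field K] [Ring A] [Algebra K A]

theorem isIdempotentElem_inv_two_smul_one_add {a : A} (ha : a * a = 1) :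
    IsIdempotentElem ((2 : K)⁻¹ • (1 + a)) := by
  have hsq : (1 + a) * (1 + a) = (2 : K) • (1 + a) := by
    rw [add_mul, mul_add, mul_add, one_mul, mul_one, one_mul, ha, two_smul]
    abel
  simp only [IsIdempotentElem, smul_mul_assoc, mul_smul_comm, hsq, inv_smul_inv_smul_smul]

theorem one_sub_inv_smul_mul_mul_one_sub_inv_smul {S P : A} {c : K} (hPP : P * P = c • P)
    (hSP : S * P = P) (hPS : P * S = P) :
    (1 - c⁻¹ • P) * S * (1 - c⁻¹ • P) = S - c⁻¹ • P := by
  simp only [sub_mul, mul_sub, one_mul, mul_one, smul_mul_assoc, mul_smul_comm, hSP, hPS, hPP,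
    smul_sub, inv_smul_inv_smul_smul]
  abel

theorem IsIdempotentElem.sub_inv_smul {S P : A} {c : K} (hS : IsIdempotentElem S)
    (hPP : P * P = c • P) (hSP : S * P = P) (hPS : P * S = P) :
    IsIdempotentElem (S - c⁻¹ • P) := by
  simp only [IsIdempotentElem, sub_mul, mul_sub, smul_mul_assoc, mul_smul_comm, hS.eq, hSP, hPS,
    hPP, smul_sub, inv_smul_inv_smul_smul]
  abel

variable [NeZero (2 : K)] {a p : A}

theorem inv_two_smul_one_add_mul (h : a * p = p) : ((2 : K)⁻¹ • (1 + a)) * p = p := by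
  rw [smul_mul_assoc, add_mul, one_mul, h, ← two_smul K, inv_smul_smul₀ two_ne_zero]

theorem mul_inv_two_smul_one_add (h : p * a = p) : p * ((2 : K)⁻¹ • (1 + a)) = p := by
  rw [mul_smul_comm, mul_add, mul_one, h, ← two_smul K, inv_smul_smul₀ two_ne_zero]

end Algebra

theorem Matrix.cast_rank_eq_trace_of_isIdempotentElem {n K : Type*} [Fintype n] [DecidableEq n]
    [Field K] {M : Matrix n n K} (hM : IsIdempotentElem M) : (M.rank : K) = M.trace := by
  have h : IsIdempotentElem (toLin' M) := hM.map toLinAlgEquiv'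
  rw [← trace_toLin'_eq, (LinearMap.IsIdempotentElem.isProj_range _ h).trace, rank, toLin'_apply']

theorem commMat_mul_self (r : ℕ) : commMat r * commMat r = 1 := by
  ext ⟨i, j⟩ ⟨k, l⟩
  simp [mul_apply, commMat, Fintype.sum_prod_type, one_apply, Prod.ext_iff, ite_and, eq_comm,
    and_comm]

theorem transpose_commMat (r : ℕ) : (commMat r)ᵀ = commMat r := by
  ext ⟨i, j⟩ ⟨k, l⟩
  simp only [transpose_apply, commMat]
  grind

theorem commMat_mulVec_vecIdFun (r : ℕ) : commMat r *ᵥ vecIdFun r = vecIdFun r := by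
  ext ⟨i, j⟩
  simp [mulVec, dotProduct, commMat, vecIdFun, Fintype.sum_prod_type, ite_and, eq_comm]

theorem vecIdFun_dotProduct_self (r : ℕ) : vecIdFun r ⬝ᵥ vecIdFun r = r := by
  simp [dotProduct, vecIdFun, Fintype.sum_prod_type]

theorem trace_commMat (r : ℕ) : (commMat r).trace = r := by
  simp only [trace, diag_apply, commMat, Fintype.sum_prod_type]
  simp [ite_and]

theorem commMat_mul_vecMulVec_vecIdFun (r : ℕ) :
    commMat r * vecMulVec (vecIdFun r) (vecIdFun r) = vecMulVec (vecIdFun r) (vecIdFun r) := by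
  rw [mul_vecMulVec, commMat_mulVec_vecIdFun]

theorem vecMulVec_vecIdFun_mul_commMat (r : ℕ) :
    vecMulVec (vecIdFun r) (vecIdFun r) * commMat r = vecMulVec (vecIdFun r) (vecIdFun r) := by
  rw [vecMulVec_mul, ← mulVec_transpose, transpose_commMat, commMat_mulVec_vecIdFun]

theorem vecMulVec_vecIdFun_mul_self (r : ℕ) :
    vecMulVec (vecIdFun r) (vecIdFun r) * vecMulVec (vecIdFun r) (vecIdFun r) =
      (r : ℝ) • vecMulVec (vecIdFun r) (vecIdFun r) := by
  rw [vecMulVec_mul_vecMulVec, vecIdFun_dotProduct_self, vecMulVec_smul]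

theorem trace_vecMulVec_vecIdFun (r : ℕ) : (vecMulVec (vecIdFun r) (vecIdFun r)).trace = r := by
  rw [trace_vecMulVec, vecIdFun_dotProduct_self]

theorem trace_inv_two_smul_one_add_commMat_sub_mul_two (r : ℕ) :
    ((2 : ℝ)⁻¹ • (1 + commMat r) - (r : ℝ)⁻¹ • vecMulVec (vecIdFun r) (vecIdFun r)).trace * 2 =
      ((r - 1) * (r + 2) : ℕ) := by
  rcases r with _ | r
  · simp
  simp only [trace_sub, trace_smul, trace_add, trace_one, trace_commMat, trace_vecMulVec_vecIdFun,
    Fintype.card_prod, Fintype.card_fin, smul_eq_mul]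
  push_cast
  field_simp
  ring

theorem stmt6_general (r : ℕ) :
    centerMat r * ((2 : ℝ)⁻¹ • (1 + commMat r)) * centerMat r =
        (2 : ℝ)⁻¹ • (1 + commMat r -
          (2 / (r : ℝ)) • Matrix.vecMulVec (vecIdFun r) (vecIdFun r)) ∧
      (centerMat r * ((2 : ℝ)⁻¹ • (1 + commMat r)) * centerMat r).IsSymm ∧
      (centerMat r * ((2 : ℝ)⁻¹ • (1 + commMat r)) * centerMat r) *
          (centerMat r * ((2 : ℝ)⁻¹ • (1 + commMat r)) * centerMat r) =
        centerMat r * ((2 : ℝ)⁻¹ • (1 + commMat r)) * centerMat r ∧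
      (centerMat r * ((2 : ℝ)⁻¹ • (1 + commMat r)) * centerMat r).rank =
        (r - 1) * (r + 2) / 2 := by
  set V := vecMulVec (vecIdFun r) (vecIdFun r)
  have hSV : ((2 : ℝ)⁻¹ • (1 + commMat r)) * V = V :=
    inv_two_smul_one_add_mul (commMat_mul_vecMulVec_vecIdFun r)
  have hVS : V * ((2 : ℝ)⁻¹ • (1 + commMat r)) = V :=
    mul_inv_two_smul_one_add (vecMulVec_vecIdFun_mul_commMat r)
  set M := (2 : ℝ)⁻¹ • (1 + commMat r) - (r : ℝ)⁻¹ • V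
  have hconj : centerMat r * ((2 : ℝ)⁻¹ • (1 + commMat r)) * centerMat r = M :=
    one_sub_inv_smul_mul_mul_one_sub_inv_smul (vecMulVec_vecIdFun_mul_self r) hSV hVS
  have hidem : IsIdempotentElem M :=
    (isIdempotentElem_inv_two_smul_one_add (commMat_mul_self r)).sub_inv_smul
      (vecMulVec_vecIdFun_mul_self r) hSV hVS
  have hV : V.IsSymm := transpose_vecMulVec _ _
  rw [hconj]
  refine ⟨?_, ((isSymm_one.add (transpose_commMat r)).smul _).sub (hV.smul _), hidem.eq, ?_⟩
  · rw [smul_sub, smul_smul, div_eq_mul_inv, inv_mul_cancel_left₀ two_ne_zero]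
  · have h : M.rank * 2 = (r - 1) * (r + 2) := by
      exact_mod_cast cast_rank_eq_trace_of_isIdempotentElem hidem ▸
        trace_inv_two_smul_one_add_commMat_sub_mul_two r
    omega

/-- `Σ₀ = Γ ((I + K)/2) Γ` equals `(I + K − (2/r) vec(I)vec(I)ᵀ)/2`, and is
symmetric idempotent of rank `(r−1)(r+2)/2`. -/
theorem stmt6 (r : ℕ) (hr : 1 ≤ r) :
    centerMat r * ((2 : ℝ)⁻¹ • (1 + commMat r)) * centerMat r =
        (2 : ℝ)⁻¹ • (1 + commMat r -
          (2 / (r : ℝ)) • Matrix.vecMulVec (vecIdFun r) (vecIdFun r)) ∧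
      (centerMat r * ((2 : ℝ)⁻¹ • (1 + commMat r)) * centerMat r).IsSymm ∧
      (centerMat r * ((2 : ℝ)⁻¹ • (1 + commMat r)) * centerMat r) *
          (centerMat r * ((2 : ℝ)⁻¹ • (1 + commMat r)) * centerMat r) =
        centerMat r * ((2 : ℝ)⁻¹ • (1 + commMat r)) * centerMat r ∧
      (centerMat r * ((2 : ℝ)⁻¹ • (1 + commMat r)) * centerMat r).rank =
        (r - 1) * (r + 2) / 2 :=
  stmt6_general r
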